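/- arXiv:1809.00941 — 2 statements merged into one kernel-verified Lean document; each statement's English description precedes it below -/
import Mathlib

section
/- Let B be a filtered bialgebra whose degree-zero part is spanned by group-like elements and A a commutative algebra. If φ : B → A is a linear map sending group-like elements to 1, is multiplicative (φ(xy) = φ(x)φ(y)), and ψ is its convolution inverse, then ψ is also multiplicative. -/
/-!
Both `x ⊗ y ↦ ψ (x * y)` and `x ⊗ y ↦ ψ x * ψ y` are convolution inverses of
`Φ : x ⊗ y ↦ φ (x * y) = φ x * φ y` in `Hom(B ⊗ B, A)`: the first because multiplication
`B ⊗ B → B` is a coalgebra map, the second because, `A` being commutative,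
`(f ⊗ g) * (f' ⊗ g') = (f * f') ⊗ (g * g')`. Inverses in a monoid are unique.
-/

open TensorProduct

section

variable {k : Type*} [Field k] {B : Type*} [Ring B] [Bialgebra k B]
variable {A : Type*} [CommRing A] [Algebra k A]

/-- Convolution product on `Lin(B, A)`. -/
noncomputable def conv (α β : B →ₗ[k] A) : B →ₗ[k] A :=
  LinearMap.mul' k A ∘ₗ TensorProduct.map α β ∘ₗ Coalgebra.comul

/-- The convolution unit `e = u ∘ ε`. -/
noncomputable def convUnit : B →ₗ[k] A :=
  Algebra.linearMap k A ∘ₗ Coalgebra.counit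

/-- Group-like elements: `Δ x = x ⊗ x` and `ε x = 1`. -/
def IsGroupLike (x : B) : Prop :=
  Coalgebra.comul x = x ⊗ₜ[k] x ∧ Coalgebra.counit x = (1 : k)

/-- Filtration condition `Δ(Bₙ) ⊆ ∑_{p+q=n} B_p ⊗ B_q`. -/
def ComulFiltered (F : ℕ → Submodule k B) : Prop :=
  ∀ n : ℕ, F n ≤ Submodule.comap (Coalgebra.comul : B →ₗ[k] B ⊗[k] B)
    (⨆ p ∈ {p : ℕ × ℕ | p.1 + p.2 = n},
      LinearMap.range (TensorProduct.map (F p.1).subtype (F p.2).subtype))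

section

open WithConv LinearMap

lemma LinearMap.convOne_comp_coalgHom' {R C E S : Type*} [CommSemiring R] [Semiring S]
    [Algebra R S] [AddCommMonoid C] [Module R C] [Coalgebra R C] [AddCommMonoid E] [Module R E]
    [Coalgebra R E] (g : E →ₗc[R] C) :
    (1 : WithConv (C →ₗ[R] S)).ofConv ∘ₗ g.toLinearMap = (1 : WithConv (E →ₗ[R] S)).ofConv := by
  ext; simp

variable {R C D S : Type*} [CommSemiring R] [CommSemiring S] [Algebra R S]
  [AddCommMonoid C] [Module R C] [Coalgebra R C] [AddCommMonoid D] [Module R D] [Coalgebra R D]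

lemma LinearMap.mul'_comp_map_convMul (f g : WithConv (C →ₗ[R] S))
    (f' g' : WithConv (D →ₗ[R] S)) :
    toConv (mul' R S ∘ₗ TensorProduct.map f.ofConv f'.ofConv) *
        toConv (mul' R S ∘ₗ TensorProduct.map g.ofConv g'.ofConv) =
      toConv (mul' R S ∘ₗ TensorProduct.map (f * g).ofConv (f' * g').ofConv) := by
  have := algHom_comp_convMul_distrib (Algebra.TensorProduct.lmul' R (S := S))
    (toConv (TensorProduct.map f.ofConv f'.ofConv)) (toConv (TensorProduct.map g.ofConv g'.ofConv))
  rw [TensorProduct.map_convMul_map] at this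
  exact toConv_injective.eq_iff.mpr this.symm

lemma LinearMap.mul'_comp_map_convOne :
    toConv (mul' R S ∘ₗ TensorProduct.map (1 : WithConv (C →ₗ[R] S)).ofConv
      (1 : WithConv (D →ₗ[R] S)).ofConv) = 1 := by
  ext c d
  simp [TensorProduct.counit_tmul, mul_comm]

theorem LinearMap.comp_mul'_eq_of_convMul_eq_one {H : Type*} [Semiring H] [Bialgebra R H]
    {φ ψ : H →ₗ[R] S} (hφ : φ ∘ₗ mul' R H = mul' R S ∘ₗ TensorProduct.map φ φ)
    (hψφ : toConv ψ * toConv φ = 1) (hφψ : toConv φ * toConv ψ = 1) :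
    ψ ∘ₗ mul' R H = mul' R S ∘ₗ TensorProduct.map ψ ψ := by
  have hl : toConv (ψ ∘ₗ mul' R H) * toConv (φ ∘ₗ mul' R H) = 1 := by
    have := convMul_comp_coalgHom_distrib (toConv ψ) (toConv φ) (Bialgebra.mulCoalgHom R H)
    rw [hψφ, convOne_comp_coalgHom'] at this
    exact toConv_injective.eq_iff.mpr this.symm
  have hr : toConv (φ ∘ₗ mul' R H) * toConv (mul' R S ∘ₗ TensorProduct.map ψ ψ) = 1 := by
    rw [hφ]
    exact (mul'_comp_map_convMul (toConv φ) (toConv ψ) (toConv φ) (toConv ψ)).trans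
      (by rw [hφψ, mul'_comp_map_convOne])
  exact toConv_injective (left_inv_eq_right_inv hl hr)

end

theorem conv_inverse_multiplicative_general (φ ψ : B →ₗ[k] A)
    (hφm : ∀ x y : B, φ (x * y) = φ x * φ y)
    (hψ : conv ψ φ = convUnit ∧ conv φ ψ = convUnit) :
    ∀ x y : B, ψ (x * y) = ψ x * ψ y := by
  have hφ : φ ∘ₗ LinearMap.mul' k B = LinearMap.mul' k A ∘ₗ TensorProduct.map φ φ :=
    TensorProduct.ext' hφm
  have key := LinearMap.comp_mul'_eq_of_convMul_eq_one hφ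
    (congrArg WithConv.toConv hψ.1) (congrArg WithConv.toConv hψ.2)
  intro x y
  simpa using congr($key (x ⊗ₜ y))

/-- If `φ` is multiplicative and sends group-like elements to `1`, then its
convolution inverse `ψ` is also multiplicative. -/
theorem conv_inverse_multiplicative (F : ℕ → Submodule k B) (hmono : Monotone F)
    (hexh : ⨆ n, F n = ⊤) (hfilt : ComulFiltered F)
    (hF0 : F 0 = Submodule.span k {x : B | IsGroupLike (k := k) x})
    (φ ψ : B →ₗ[k] A)
    (hφ1 : ∀ x : B, IsGroupLike (k := k) x → φ x = 1)
    (hφm : ∀ x y : B, φ (x * y) = φ x * φ y)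
    (hψ : conv ψ φ = convUnit ∧ conv φ ψ = convUnit) :
    ∀ x y : B, ψ (x * y) = ψ x * ψ y :=
  conv_inverse_multiplicative_general φ ψ hφm hψ

end
end

section
/- Multiplicativity of the counterterm: let B be a filtered bialgebra with B₀ spanned by group-like elements, A a commutative algebra, and R : A → A an idempotent Rota–Baxter operator (R(xy) + R(x)R(y) = R(R(x)y + xR(y))). If φ : B → A sends group-like elements to 1 and is multiplicative, then the map ψ defined by the Bogoliubov recursion ψ = e - R(ψ * (φ - e)) is multiplicative: ψ(xy) = ψ(x)ψ(y) for all x, y ∈ B. -/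
open TensorProduct

section

variable {k : Type*} [Field k] {B : Type*} [Ring B] [Bialgebra k B]
variable {A : Type*} [CommRing A] [Algebra k A]

/-!
Both `ψ ∘ μ` and `x ⊗ y ↦ ψ x * ψ y` solve the Bogoliubov recursion on the bialgebra `B ⊗ B`
for the character `φ ∘ μ = (x ⊗ y ↦ φ x * φ y)`: the first because `μ` is a coalgebra map, the
second because the Rota–Baxter identity turns `(e x - R a) (e y - R b)` into
`e x e y - R (a b + (e x - R a) b + a (e y - R b))`. Such a solution is unique: the filtration of
`B` induces one on `B ⊗ B`, and by induction along it the difference of two solutions vanishes,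
since `φ ∘ μ - e` vanishes on `B₀ ⊗ B₀` (products of group-like elements are group-like).
-/

open WithConv

theorem conv_convUnit (α : B →ₗ[k] A) : conv α convUnit = α :=
  congrArg ofConv (mul_one (toConv α))

theorem conv_sub (α β γ : B →ₗ[k] A) : conv α (β - γ) = conv α β - conv α γ :=
  congrArg ofConv (mul_sub (toConv α) (toConv β) (toConv γ))

theorem sub_conv (α β γ : B →ₗ[k] A) : conv (α - β) γ = conv α γ - conv β γ :=
  congrArg ofConv (sub_mul (toConv α) (toConv β) (toConv γ))

theorem conv_comp_mul' (α β : B →ₗ[k] A) :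
    conv (α ∘ₗ LinearMap.mul' k B) (β ∘ₗ LinearMap.mul' k B) = conv α β ∘ₗ LinearMap.mul' k B :=
  (LinearMap.convMul_comp_coalgHom_distrib (toConv α) (toConv β) (Bialgebra.mulCoalgHom k B)).symm

theorem convUnit_apply (x : B) :
    (convUnit : B →ₗ[k] A) x = algebraMap k A (Coalgebra.counit x) := rfl

theorem convUnit_tmul (x y : B) :
    (convUnit (k := k) : B ⊗[k] B →ₗ[k] A) (x ⊗ₜ y) =
      convUnit (k := k) x * convUnit (k := k) y := by
  simp only [convUnit_apply, TensorProduct.counit_tmul, smul_eq_mul, map_mul]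
  exact mul_comm _ _

theorem convUnit_comp_mul' : (convUnit : B →ₗ[k] A) ∘ₗ LinearMap.mul' k B = convUnit :=
  congrArg (Algebra.linearMap k A ∘ₗ ·) (Bialgebra.mulCoalgHom k B).counit_comp

section TensorProduct

variable {M N M' N' : Type*} [AddCommGroup M] [Module k M] [AddCommGroup N] [Module k N]
  [AddCommGroup M'] [Module k M'] [AddCommGroup N'] [Module k N']

noncomputable def tensorMul (α : M →ₗ[k] A) (β : N →ₗ[k] A) : M ⊗[k] N →ₗ[k] A :=
  LinearMap.mul' k A ∘ₗ TensorProduct.map α β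

@[simp]
theorem tensorMul_tmul (α : M →ₗ[k] A) (β : N →ₗ[k] A) (x : M) (y : N) :
    tensorMul α β (x ⊗ₜ y) = α x * β y := rfl

def tensorFiltration (F : ℕ → Submodule k M) (G : ℕ → Submodule k N) (n : ℕ) :
    Submodule k (M ⊗[k] N) :=
  ⨆ p ∈ {p : ℕ × ℕ | p.1 + p.2 = n},
    LinearMap.range (TensorProduct.map (F p.1).subtype (G p.2).subtype)

theorem tensorFiltration_eq_iSup_map₂ (F : ℕ → Submodule k M) (G : ℕ → Submodule k N) (n : ℕ) :
    tensorFiltration F G n =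
      ⨆ p ∈ {p : ℕ × ℕ | p.1 + p.2 = n},
        Submodule.map₂ (TensorProduct.mk k M N) (F p.1) (G p.2) := by
  simp only [tensorFiltration, TensorProduct.range_map, Submodule.range_subtype]

theorem map₂_mk_le_tensorFiltration {F : ℕ → Submodule k M} {G : ℕ → Submodule k N}
    {p q n : ℕ} (h : p + q = n) :
    Submodule.map₂ (TensorProduct.mk k M N) (F p) (G q) ≤ tensorFiltration F G n := by
  rw [tensorFiltration_eq_iSup_map₂]
  exact le_iSup₂_of_le (p, q) h le_rfl

theorem tensorTensorTensorComm_mem_tensorFiltration {F : ℕ → Submodule k M}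
    {G : ℕ → Submodule k N} {F' : ℕ → Submodule k M'} {G' : ℕ → Submodule k N'}
    {p q n : ℕ} (h : p + q = n) {s : M ⊗[k] N} {t : M' ⊗[k] N'}
    (hs : s ∈ tensorFiltration F G p) (ht : t ∈ tensorFiltration F' G' q) :
    TensorProduct.tensorTensorTensorComm k M N M' N' (s ⊗ₜ t) ∈
      tensorFiltration (tensorFiltration F F') (tensorFiltration G G') n := by
  let β := (TensorProduct.mk k (M ⊗[k] N) (M' ⊗[k] N')).compr₂
    (TensorProduct.tensorTensorTensorComm k M N M' N').toLinearMap
  refine (Submodule.map₂_le (f := β)).mp ?_ s hs t ht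
  simp only [tensorFiltration_eq_iSup_map₂ F G, tensorFiltration_eq_iSup_map₂ F' G',
    Submodule.map₂_iSup_left, Submodule.map₂_iSup_right, iSup_le_iff]
  rintro ⟨c, d⟩ hcd ⟨a, b⟩ hab
  rw [Submodule.map₂_eq_span_image2 (TensorProduct.mk k M N),
    Submodule.map₂_eq_span_image2 (TensorProduct.mk k M' N'),
    Submodule.map₂_span_span, Submodule.span_le]
  rintro _ ⟨_, ⟨x, hx, y, hy, rfl⟩, _, ⟨x', hx', y', hy', rfl⟩, rfl⟩
  have hac : x ⊗ₜ x' ∈ tensorFiltration F F' (a + c) :=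
    Submodule.map₂_le.mp (map₂_mk_le_tensorFiltration rfl) x hx x' hx'
  have hbd : y ⊗ₜ y' ∈ tensorFiltration G G' (b + d) :=
    Submodule.map₂_le.mp (map₂_mk_le_tensorFiltration rfl) y hy y' hy'
  have habcd : a + c + (b + d) = n := by
    have : a + b = p := hab
    have : c + d = q := hcd
    omega
  exact Submodule.map₂_le.mp (map₂_mk_le_tensorFiltration habcd) _ hac _ hbd

theorem iSup_tensorFiltration_eq_top {F : ℕ → Submodule k M} {G : ℕ → Submodule k N}
    (hF : ⨆ n, F n = ⊤) (hG : ⨆ n, G n = ⊤) : ⨆ n, tensorFiltration F G n = ⊤ := by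
  rw [eq_top_iff, ← TensorProduct.map₂_mk_top_top_eq_top, ← hF, ← hG, Submodule.map₂_iSup_left]
  simp only [Submodule.map₂_iSup_right, iSup_le_iff]
  exact fun p q => (map₂_mk_le_tensorFiltration rfl).trans (le_iSup _ (p + q))

end TensorProduct

theorem conv_tensorMul (α β γ δ : B →ₗ[k] A) :
    conv (tensorMul α β) (tensorMul γ δ) = tensorMul (conv α γ) (conv β δ) := by
  have h := LinearMap.algHom_comp_convMul_distrib (Algebra.TensorProduct.lmul' k (S := A))
    (toConv (TensorProduct.map α β)) (toConv (TensorProduct.map γ δ))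
  rw [TensorProduct.map_convMul_map] at h
  exact h.symm

theorem ComulFiltered.tensorFiltration {F : ℕ → Submodule k B} (hF : ComulFiltered F) :
    ComulFiltered (tensorFiltration F F) := by
  intro n
  rw [tensorFiltration_eq_iSup_map₂]
  refine iSup₂_le fun ⟨p, q⟩ hpq => Submodule.map₂_le.mpr fun x hx y hy => ?_
  rw [Submodule.mem_comap, TensorProduct.mk_apply, TensorProduct.comul_tmul,
    TensorProduct.AlgebraTensorModule.tensorTensorTensorComm_eq]
  exact tensorTensorTensorComm_mem_tensorFiltration hpq (hF p hx) (hF q hy)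

theorem tensorFiltration_zero_le_ker_comp_mul' {F : ℕ → Submodule k B} {χ : B →ₗ[k] A}
    (hmul : ∀ x ∈ F 0, ∀ y ∈ F 0, x * y ∈ F 0) (hχ : F 0 ≤ LinearMap.ker χ) :
    tensorFiltration F F 0 ≤ LinearMap.ker (χ ∘ₗ LinearMap.mul' k B) := by
  rw [tensorFiltration_eq_iSup_map₂]
  refine iSup₂_le fun ⟨p, q⟩ hpq => Submodule.map₂_le.mpr fun x hx y hy => ?_
  obtain ⟨rfl, rfl⟩ : p = 0 ∧ q = 0 := Nat.add_eq_zero_iff.mp hpq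
  simpa using hχ (hmul x hx y hy)

theorem eq_zero_of_eq_comp_conv {C : Type*} [Ring C] [Bialgebra k C] {F : ℕ → Submodule k C}
    (hfilt : ComulFiltered F) (hexh : ⨆ n, F n = ⊤) {G χ : C →ₗ[k] A} {T : A →ₗ[k] A}
    (hχ : F 0 ≤ LinearMap.ker χ) (hG : G = T ∘ₗ conv G χ) : G = 0 := by
  have hF : ∀ n, F n ≤ LinearMap.ker G := by
    intro n
    induction n using Nat.strong_induction_on with
    | _ n ih =>
      -- the summand `F p ⊗ F q` of `Δ (F n)` is killed by `χ` if `q = 0`, and by `G` otherwise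
      have hΔ : (⨆ p ∈ {p : ℕ × ℕ | p.1 + p.2 = n},
          LinearMap.range (TensorProduct.map (F p.1).subtype (F p.2).subtype)) ≤
            LinearMap.ker (LinearMap.mul' k A ∘ₗ TensorProduct.map G χ) := by
        refine iSup₂_le fun ⟨p, q⟩ hpq => LinearMap.range_le_ker_iff.mpr ?_
        rw [LinearMap.comp_assoc, ← TensorProduct.map_comp]
        obtain rfl | hq := Nat.eq_zero_or_pos q
        · rw [LinearMap.le_ker_iff_comp_subtype_eq_zero.mp hχ, TensorProduct.map_zero_right,
            LinearMap.comp_zero]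
        · have hp : p < n := by
            have : p + q = n := hpq
            omega
          rw [LinearMap.le_ker_iff_comp_subtype_eq_zero.mp (ih p hp), TensorProduct.map_zero_left,
            LinearMap.comp_zero]
      intro x hx
      rw [LinearMap.mem_ker, hG, LinearMap.comp_apply]
      exact (congrArg T (hΔ (hfilt n hx))).trans (map_zero T)
  exact LinearMap.ker_eq_top.mp (top_unique (hexh ▸ iSup_le hF))

theorem eq_of_eq_sub_comp_conv {C : Type*} [Ring C] [Bialgebra k C] {F : ℕ → Submodule k C}
    (hfilt : ComulFiltered F) (hexh : ⨆ n, F n = ⊤) {u ψ₁ ψ₂ χ : C →ₗ[k] A} {R : A →ₗ[k] A}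
    (hχ : F 0 ≤ LinearMap.ker χ) (hψ₁ : ψ₁ = u - R ∘ₗ conv ψ₁ χ)
    (hψ₂ : ψ₂ = u - R ∘ₗ conv ψ₂ χ) : ψ₁ = ψ₂ := by
  refine sub_eq_zero.mp (eq_zero_of_eq_comp_conv hfilt hexh (T := -R) hχ ?_)
  conv_lhs => rw [hψ₁, hψ₂]
  rw [sub_sub_sub_cancel_left, sub_conv, LinearMap.neg_comp, LinearMap.comp_sub, neg_sub]

theorem algebraMap_sub_mul_algebraMap_sub_of_rotaBaxter {R : A →ₗ[k] A}
    (hRB : ∀ a b : A, R (a * b) + R a * R b = R (R a * b + a * R b)) (s t : k) (a b : A) :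
    (algebraMap k A s - R a) * (algebraMap k A t - R b) =
      algebraMap k A (s * t) -
        R (a * b + (algebraMap k A s - R a) * b + a * (algebraMap k A t - R b)) := by
  have hs : algebraMap k A s * R b = R (algebraMap k A s * b) := by
    simpa only [Algebra.smul_def] using (R.map_smul s b).symm
  have ht : algebraMap k A t * R a = R (a * algebraMap k A t) := by
    simpa only [Algebra.smul_def, mul_comm a] using (R.map_smul t a).symm
  have hRBab := hRB a b
  rw [map_add] at hRBab
  simp only [mul_sub, sub_mul, map_add, map_sub, map_mul]
  linear_combination -hs - ht + hRBab

theorem comp_mul'_eq_convUnit_sub_comp_conv {ψ χ : B →ₗ[k] A} {R : A →ₗ[k] A}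
    (hψ : ψ = convUnit - R ∘ₗ conv ψ χ) :
    ψ ∘ₗ LinearMap.mul' k B =
      convUnit - R ∘ₗ conv (ψ ∘ₗ LinearMap.mul' k B) (χ ∘ₗ LinearMap.mul' k B) := by
  rw [conv_comp_mul', ← convUnit_comp_mul', ← LinearMap.comp_assoc, ← LinearMap.sub_comp, ← hψ]

theorem tensorMul_self_eq_convUnit_sub_comp_conv {ψ φ : B →ₗ[k] A} {R : A →ₗ[k] A}
    (hRB : ∀ a b : A, R (a * b) + R a * R b = R (R a * b + a * R b))
    (hφ : φ ∘ₗ LinearMap.mul' k B = tensorMul φ φ)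
    (hψ : ψ = convUnit - R ∘ₗ conv ψ (φ - convUnit)) :
    tensorMul ψ ψ =
      convUnit - R ∘ₗ conv (tensorMul ψ ψ) ((φ - convUnit) ∘ₗ LinearMap.mul' k B) := by
  have hψφ : conv ψ φ = conv ψ (φ - convUnit) + ψ := by
    rw [conv_sub, conv_convUnit, sub_add_cancel]
  set a := conv ψ (φ - convUnit)
  rw [LinearMap.sub_comp, hφ, convUnit_comp_mul', conv_sub, conv_convUnit, conv_tensorMul, hψφ]
  refine TensorProduct.ext' fun x y => ?_
  have hψx : ∀ z, ψ z = algebraMap k A (Coalgebra.counit z) - R (a z) := fun z => by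
    conv_lhs => rw [hψ]
    rfl
  have hψxy := algebraMap_sub_mul_algebraMap_sub_of_rotaBaxter hRB
    (Coalgebra.counit x) (Coalgebra.counit y) (a x) (a y)
  rw [← hψx, ← hψx, map_mul] at hψxy
  simp only [LinearMap.sub_apply, LinearMap.comp_apply, LinearMap.add_apply, tensorMul_tmul,
    convUnit_tmul]
  rw [show (a x + ψ x) * (a y + ψ y) - ψ x * ψ y = a x * a y + ψ x * a y + a x * ψ y by ring]
  exact hψxy

theorem IsGroupLike.mul {g h : B} (hg : IsGroupLike (k := k) g) (hh : IsGroupLike (k := k) h) :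
    IsGroupLike (k := k) (g * h) :=
  ⟨by rw [Bialgebra.comul_mul, hg.1, hh.1, Algebra.TensorProduct.tmul_mul_tmul],
    by rw [Bialgebra.counit_mul, hg.2, hh.2, one_mul]⟩

theorem mul_mem_span_isGroupLike {x y : B}
    (hx : x ∈ Submodule.span k {g : B | IsGroupLike (k := k) g})
    (hy : y ∈ Submodule.span k {g : B | IsGroupLike (k := k) g}) :
    x * y ∈ Submodule.span k {g : B | IsGroupLike (k := k) g} := by
  have hxy := Submodule.mul_mem_mul hx hy
  rw [Submodule.span_mul_span] at hxy
  refine Submodule.span_mono ?_ hxy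
  rintro _ ⟨g, hg, h, hh, rfl⟩
  exact hg.mul hh

theorem counterterm_multiplicative_general (F : ℕ → Submodule k B)
    (hexh : ⨆ n, F n = ⊤) (hfilt : ComulFiltered F)
    (hF0 : F 0 = Submodule.span k {x : B | IsGroupLike (k := k) x})
    (R : A →ₗ[k] A)
    (hRB : ∀ a b : A, R (a * b) + R a * R b = R (R a * b + a * R b))
    (φ ψ : B →ₗ[k] A)
    (hφ1 : ∀ x : B, IsGroupLike (k := k) x → φ x = 1)
    (hφm : ∀ x y : B, φ (x * y) = φ x * φ y)
    (hψ : ψ = convUnit - R ∘ₗ (conv ψ (φ - convUnit))) :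
    ∀ x y : B, ψ (x * y) = ψ x * ψ y := by
  have hχ : F 0 ≤ LinearMap.ker (φ - convUnit) := by
    rw [hF0, Submodule.span_le]
    intro g hg
    simp [hφ1 g hg, convUnit_apply, hg.2]
  have hF0_mul : ∀ x ∈ F 0, ∀ y ∈ F 0, x * y ∈ F 0 := by
    simpa only [hF0] using fun x hx y hy => mul_mem_span_isGroupLike hx hy
  have hφ : φ ∘ₗ LinearMap.mul' k B = tensorMul φ φ :=
    TensorProduct.ext' fun x y => hφm x y
  have hψ_mul : ψ ∘ₗ LinearMap.mul' k B = tensorMul ψ ψ :=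
    eq_of_eq_sub_comp_conv hfilt.tensorFiltration (iSup_tensorFiltration_eq_top hexh hexh)
      (tensorFiltration_zero_le_ker_comp_mul' hF0_mul hχ) (comp_mul'_eq_convUnit_sub_comp_conv hψ)
      (tensorMul_self_eq_convUnit_sub_comp_conv hRB hφ hψ)
  exact fun x y => LinearMap.congr_fun hψ_mul (x ⊗ₜ y)

/-- Multiplicativity of the counterterm: if `R` is an idempotent Rota–Baxter
operator on the commutative algebra `A` and `φ : B → A` is multiplicative and
sends group-like elements to `1`, then the map `ψ` given by the Bogoliubov
recursion `ψ = e - R(ψ * (φ - e))` is multiplicative. -/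
theorem counterterm_multiplicative (F : ℕ → Submodule k B) (hmono : Monotone F)
    (hexh : ⨆ n, F n = ⊤) (hfilt : ComulFiltered F)
    (hF0 : F 0 = Submodule.span k {x : B | IsGroupLike (k := k) x})
    (R : A →ₗ[k] A) (hidem : ∀ a : A, R (R a) = R a)
    (hRB : ∀ a b : A, R (a * b) + R a * R b = R (R a * b + a * R b))
    (φ ψ : B →ₗ[k] A)
    (hφ1 : ∀ x : B, IsGroupLike (k := k) x → φ x = 1)
    (hφm : ∀ x y : B, φ (x * y) = φ x * φ y)
    (hψ : ψ = convUnit - R ∘ₗ (conv ψ (φ - convUnit))) :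
    ∀ x y : B, ψ (x * y) = ψ x * ψ y :=
  counterterm_multiplicative_general F hexh hfilt hF0 R hRB φ ψ hφ1 hφm hψ

end
end
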